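/- arXiv:2208.14404 — 10 statements merged into one kernel-verified Lean document; each statement's English description precedes it below -/
import Mathlib

section
/- Let p be a prime, m a positive integer, n = p^m - 1, and e an integer with 1 ≤ e ≤ n-1. If 1 ≤ gcd(e, n) ≤ p-1, then the size of the p-cyclotomic coset C_e modulo n is m, i.e., the least positive integer l with e·p^l ≡ e (mod n) equals m. -/
/-!
Since `p ^ m ≡ 1 [MOD n]`, the coset has size at most `m`. Conversely, if `e * p ^ l ≡ e [MOD n]`
then cancelling `e` gives `n / gcd n e ∣ p ^ l - 1`, so `n ≤ (p - 1) * (p ^ l - 1) < p ^ (l + 1) - 1`,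
which forces `l + 1 > m`.
-/

namespace Nat

theorem le_gcd_mul_sub_one_of_mul_modEq_self {n e a : ℕ} (hn : 0 < n) (ha : 1 < a)
    (h : e * a ≡ e [MOD n]) : n ≤ gcd n e * (a - 1) := by
  have hcancel : a ≡ 1 [MOD n / gcd n e] :=
    ModEq.cancel_left_div_gcd hn (by rwa [mul_one])
  have hdvd : n / gcd n e ∣ a - 1 := (modEq_iff_dvd' ha.le).mp hcancel.symm
  calc n = gcd n e * (n / gcd n e) := (Nat.mul_div_cancel' (gcd_dvd_left n e)).symm
    _ ≤ gcd n e * (a - 1) := Nat.mul_le_mul_left _ (le_of_dvd (by omega) hdvd)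

theorem sub_one_mul_pow_sub_one_lt {p : ℕ} (hp : 2 ≤ p) (l : ℕ) :
    (p - 1) * (p ^ l - 1) < p ^ (l + 1) - 1 := by
  have hpl : 1 ≤ p ^ l := one_le_pow _ _ (by omega)
  have hexpand : (p - 1) * (p ^ l - 1) + (p ^ l + p) = p ^ (l + 1) + 1 := by
    zify [hpl, show 1 ≤ p by omega]
    ring
  omega

end Nat

theorem stmt_0_general (p m e n : ℕ) (hp : p.Prime) (hm : 0 < m)
    (hn : n = p ^ m - 1)
    (hg2 : Nat.gcd e n ≤ p - 1) :
    IsLeast {l : ℕ | 0 < l ∧ e * p ^ l ≡ e [MOD n]} m := by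
  subst hn
  have hp2 := hp.two_le
  have hpm : p ≤ p ^ m := Nat.le_self_pow hm.ne' p
  refine ⟨⟨hm, ?_⟩, fun l ⟨hl, hmod⟩ => ?_⟩
  · simpa using (Nat.modEq_sub (show 1 ≤ p ^ m by omega)).mul_left e
  · by_contra! hlm
    have hpl : p ≤ p ^ l := Nat.le_self_pow hl.ne' p
    have hbound := Nat.le_gcd_mul_sub_one_of_mul_modEq_self (by omega) (by omega) hmod
    have hgcd : Nat.gcd (p ^ m - 1) e ≤ p - 1 := Nat.gcd_comm e _ ▸ hg2
    have hpow : p ^ (l + 1) ≤ p ^ m := Nat.pow_le_pow_right (by omega) hlm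
    have hlt := Nat.sub_one_mul_pow_sub_one_lt hp2 l
    have hgcd_mul := Nat.mul_le_mul_right (p ^ l - 1) hgcd
    omega

theorem stmt_0 (p m e n : ℕ) (hp : p.Prime) (hm : 0 < m)
    (hn : n = p ^ m - 1)
    (he1 : 1 ≤ e) (he2 : e ≤ n - 1)
    (hg1 : 1 ≤ Nat.gcd e n) (hg2 : Nat.gcd e n ≤ p - 1) :
    IsLeast {l : ℕ | 0 < l ∧ e * p ^ l ≡ e [MOD n]} m :=
  stmt_0_general p m e n hp hm hn hg2
end

section
/- Let p ≥ 5 be a prime, m a positive integer with p^m ≡ 1 (mod 4), and s = (p^m - 1)/2. Suppose c_2, c_3 ∈ F_p^* satisfy 1 + c_2 + c_3 = 0, and x_1, x_2, x_3 ∈ F_{p^m}^* satisfy x_1 + c_2·x_2 + c_3·x_3 = 0, x_1^{-1} + c_2·x_2^{-1} + c_3·x_3^{-1} = 0, and x_1^s = x_2^s = x_3^s = 1. Then x_2 = x_3. -/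
/-!
Clearing denominators turns the second relation into `x₂x₃ + c₂x₁x₃ + c₃x₁x₂ = 0`. Eliminating
`x₁ = -c₂x₂ - c₃x₃` and using `1 = (c₂ + c₃)²`, its left side becomes `-c₂c₃(x₂ - x₃)²`.
-/

theorem mul_mul_sub_sq_eq_of_add_eq_zero {R : Type*} [CommRing R] {b c x₁ x₂ x₃ : R}
    (hbc : 1 + b + c = 0) (h : x₁ + b * x₂ + c * x₃ = 0) :
    b * c * (x₂ - x₃) ^ 2 = -(x₂ * x₃ + b * (x₁ * x₃) + c * (x₁ * x₂)) := by
  linear_combination (b * x₃ + c * x₂) * h + x₂ * x₃ * (1 - b - c) * hbc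

theorem eq_of_add_eq_zero_of_inv_add_eq_zero {K : Type*} [Field K] {b c x₁ x₂ x₃ : K}
    (hb : b ≠ 0) (hc : c ≠ 0) (hbc : 1 + b + c = 0)
    (hx₁ : x₁ ≠ 0) (hx₂ : x₂ ≠ 0) (hx₃ : x₃ ≠ 0)
    (h : x₁ + b * x₂ + c * x₃ = 0) (hinv : x₁⁻¹ + b * x₂⁻¹ + c * x₃⁻¹ = 0) :
    x₂ = x₃ := by
  have hcleared : x₂ * x₃ + b * (x₁ * x₃) + c * (x₁ * x₂) = 0 := by
    field_simp at hinv
    linear_combination hinv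
  have hsq : b * c * (x₂ - x₃) ^ 2 = 0 := by
    rw [mul_mul_sub_sq_eq_of_add_eq_zero hbc h, hcleared, neg_zero]
  simpa [hb, hc, sub_eq_zero] using hsq

theorem stmt_3_general (p : ℕ)
    (F : Type) [Field F] [CharP F p]
    (c2 c3 : ZMod p) (hc2 : c2 ≠ 0) (hc3 : c3 ≠ 0)
    (hsum : 1 + c2 + c3 = 0)
    (x1 x2 x3 : F) (hx1 : x1 ≠ 0) (hx2 : x2 ≠ 0) (hx3 : x3 ≠ 0)
    (heq1 : x1 + (ZMod.castHom (dvd_refl p) F c2) * x2 + (ZMod.castHom (dvd_refl p) F c3) * x3 = 0)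
    (heq2 : x1⁻¹ + (ZMod.castHom (dvd_refl p) F c2) * x2⁻¹ + (ZMod.castHom (dvd_refl p) F c3) * x3⁻¹ = 0) :
    x2 = x3 := by
  have hinj := ZMod.castHom_injective (n := p) F
  refine eq_of_add_eq_zero_of_inv_add_eq_zero ?_ ?_ ?_ hx1 hx2 hx3 heq1 heq2
  · exact (map_ne_zero_iff _ hinj).mpr hc2
  · exact (map_ne_zero_iff _ hinj).mpr hc3
  · simpa using congrArg (ZMod.castHom (dvd_refl p) F) hsum

theorem stmt_3 (p m : ℕ) (hp : p.Prime) (hp5 : 5 ≤ p) (hm : 0 < m)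
    (F : Type) [Field F] [Fintype F] [CharP F p]
    (hcard : Fintype.card F = p ^ m) (h4 : p ^ m % 4 = 1)
    (c2 c3 : ZMod p) (hc2 : c2 ≠ 0) (hc3 : c3 ≠ 0)
    (hsum : 1 + c2 + c3 = 0)
    (x1 x2 x3 : F) (hx1 : x1 ≠ 0) (hx2 : x2 ≠ 0) (hx3 : x3 ≠ 0)
    (heq1 : x1 + (ZMod.castHom (dvd_refl p) F c2) * x2 + (ZMod.castHom (dvd_refl p) F c3) * x3 = 0)
    (heq2 : x1⁻¹ + (ZMod.castHom (dvd_refl p) F c2) * x2⁻¹ + (ZMod.castHom (dvd_refl p) F c3) * x3⁻¹ = 0)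
    (hs1 : x1 ^ ((p ^ m - 1) / 2) = 1) (hs2 : x2 ^ ((p ^ m - 1) / 2) = 1)
    (hs3 : x3 ^ ((p ^ m - 1) / 2) = 1) :
    x2 = x3 :=
  stmt_3_general p F c2 c3 hc2 hc3 hsum x1 x2 x3 hx1 hx2 hx3 heq1 heq2
end

section
/- Let p ≥ 5 be a prime and m a positive integer with p^m ≡ 1 (mod 4). Let e = p^m - 2 and s = (p^m - 1)/2. There do not exist c_2, c_3 ∈ F_p^* and pairwise distinct x_1, x_2, x_3 ∈ F_{p^m}^* such that x_1 + c_2·x_2 + c_3·x_3 = 0, x_1^e + c_2·x_2^e + c_3·x_3^e = 0, and x_1^s + c_2·x_2^s + c_3·x_3^s = 0. -/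
/-!
Write `A, B` for the images of `c₂, c₃` in `F` and `εᵢ = xᵢ ^ s = ±1`. Eliminating `x₁` between
the linear relation and the relation for the inverses gives
`(1 - A² - B²) x₂ x₃ = A B (x₂² + x₃²)`, while squaring `ε₁ = -(A ε₂ + B ε₃)` gives
`1 - A² - B² = 2 A B ε₂ ε₃`. Together, `A B (x₂ ε₂ - x₃ ε₃)² = 0`, so `x₂ ε₂ = x₃ ε₃`.
Since `p ^ m ≡ 1 (mod 4)`, `s` is even, so `(x ε)^s = x^s` whenever `ε = x^s = ±1`; applying
`x ↦ x ^ s` to `x₂ ε₂ = x₃ ε₃` therefore gives `ε₂ = ε₃`, hence `x₂ = x₃`.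
-/

theorem FiniteField.pow_card_sub_two_eq_inv {K : Type*} [GroupWithZero K] [Fintype K]
    {a : K} (ha : a ≠ 0) : a ^ (Fintype.card K - 2) = a⁻¹ := by
  have hcard : 1 < Fintype.card K := Fintype.one_lt_card
  refine eq_inv_of_mul_eq_one_left ?_
  rw [← pow_succ, show Fintype.card K - 2 + 1 = Fintype.card K - 1 by omega]
  exact FiniteField.pow_card_sub_one_eq_one a ha

theorem FiniteField.pow_card_sub_one_div_two_sq {K : Type*} [GroupWithZero K] [Fintype K]
    (hK : Odd (Fintype.card K)) {a : K} (ha : a ≠ 0) :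
    (a ^ ((Fintype.card K - 1) / 2)) ^ 2 = 1 := by
  rw [← pow_mul, Nat.div_mul_cancel (Nat.Odd.sub_odd hK odd_one).two_dvd]
  exact FiniteField.pow_card_sub_one_eq_one a ha

theorem mul_pow_self_pow_of_even {M : Type*} [CommMonoid M] {x : M} {s : ℕ} (hs : Even s)
    (hx : (x ^ s) ^ 2 = 1) : (x * x ^ s) ^ s = x ^ s := by
  obtain ⟨k, hk⟩ := hs.two_dvd
  rw [mul_pow]
  generalize x ^ s = y at hx ⊢
  rw [hk, pow_mul, hx, one_pow, mul_one]

theorem mul_eq_mul_of_add_inv_add_eq_zero {F : Type*} [Field F] {A B x₁ x₂ x₃ ε₁ ε₂ ε₃ : F}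
    (hA : A ≠ 0) (hB : B ≠ 0) (hx₁ : x₁ ≠ 0) (hx₂ : x₂ ≠ 0) (hx₃ : x₃ ≠ 0)
    (hε₁ : ε₁ ^ 2 = 1) (hε₂ : ε₂ ^ 2 = 1) (hε₃ : ε₃ ^ 2 = 1)
    (hx : x₁ + A * x₂ + B * x₃ = 0) (hinv : x₁⁻¹ + A * x₂⁻¹ + B * x₃⁻¹ = 0)
    (hε : ε₁ + A * ε₂ + B * ε₃ = 0) :
    x₂ * ε₂ = x₃ * ε₃ := by
  have hinv' : x₂ * x₃ + A * (x₁ * x₃) + B * (x₁ * x₂) = 0 := by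
    field_simp at hinv
    linear_combination hinv
  have hcross : (1 - A ^ 2 - B ^ 2) * (x₂ * x₃) = A * B * (x₂ ^ 2 + x₃ ^ 2) := by
    linear_combination hinv' - (A * x₃ + B * x₂) * hx
  have hsign : 1 - A ^ 2 - B ^ 2 = 2 * A * B * ε₂ * ε₃ := by
    linear_combination (ε₁ - A * ε₂ - B * ε₃) * hε - hε₁ + A ^ 2 * hε₂ + B ^ 2 * hε₃
  have hsq : A * B * (x₂ * ε₂ - x₃ * ε₃) ^ 2 = 0 := by
    linear_combination -hcross + x₂ * x₃ * hsign + A * B * x₂ ^ 2 * hε₂ + A * B * x₃ ^ 2 * hε₃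
  have hdiff := (mul_eq_zero.mp hsq).resolve_left (mul_ne_zero hA hB)
  exact sub_eq_zero.mp (pow_eq_zero_iff two_ne_zero |>.mp hdiff)

theorem stmt_5_general (p m : ℕ) (hp : p.Prime)
    (F : Type) [Field F] [Fintype F] [CharP F p]
    (hcard : Fintype.card F = p ^ m) (h4 : p ^ m % 4 = 1) :
    ¬ ∃ (c2 c3 : ZMod p) (x1 x2 x3 : F), c2 ≠ 0 ∧ c3 ≠ 0 ∧
      x1 ≠ 0 ∧ x2 ≠ 0 ∧ x3 ≠ 0 ∧ x1 ≠ x2 ∧ x1 ≠ x3 ∧ x2 ≠ x3 ∧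
      x1 + (ZMod.castHom (dvd_refl p) F c2) * x2 + (ZMod.castHom (dvd_refl p) F c3) * x3 = 0 ∧
      x1 ^ (p ^ m - 2) + (ZMod.castHom (dvd_refl p) F c2) * x2 ^ (p ^ m - 2)
        + (ZMod.castHom (dvd_refl p) F c3) * x3 ^ (p ^ m - 2) = 0 ∧
      x1 ^ ((p ^ m - 1) / 2) + (ZMod.castHom (dvd_refl p) F c2) * x2 ^ ((p ^ m - 1) / 2)
        + (ZMod.castHom (dvd_refl p) F c3) * x3 ^ ((p ^ m - 1) / 2) = 0 := by
  rintro ⟨c2, c3, x1, x2, x3, hc2, hc3, hx1, hx2, hx3, -, -, h23, hlin, hinv, hsign⟩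
  have := Fact.mk hp
  rw [← hcard] at hinv hsign h4
  rw [FiniteField.pow_card_sub_two_eq_inv hx1, FiniteField.pow_card_sub_two_eq_inv hx2,
    FiniteField.pow_card_sub_two_eq_inv hx3] at hinv
  have hodd : Odd (Fintype.card F) := Nat.odd_iff.mpr (by omega)
  have hs : Even ((Fintype.card F - 1) / 2) := Nat.even_iff.mpr (by omega)
  have hε₂ := FiniteField.pow_card_sub_one_div_two_sq hodd hx2
  have hε₃ := FiniteField.pow_card_sub_one_div_two_sq hodd hx3
  have key := mul_eq_mul_of_add_inv_add_eq_zero ((map_ne_zero _).mpr hc2)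
    ((map_ne_zero _).mpr hc3) hx1 hx2 hx3 (FiniteField.pow_card_sub_one_div_two_sq hodd hx1)
    hε₂ hε₃ hlin hinv hsign
  have hε : x2 ^ ((Fintype.card F - 1) / 2) = x3 ^ ((Fintype.card F - 1) / 2) := by
    rw [← mul_pow_self_pow_of_even hs hε₂, key, mul_pow_self_pow_of_even hs hε₃]
  rw [hε] at key
  exact h23 (mul_right_cancel₀ (pow_ne_zero _ hx3) key)

theorem stmt_5 (p m : ℕ) (hp : p.Prime) (hp5 : 5 ≤ p) (hm : 0 < m)
    (F : Type) [Field F] [Fintype F] [CharP F p]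
    (hcard : Fintype.card F = p ^ m) (h4 : p ^ m % 4 = 1) :
    ¬ ∃ (c2 c3 : ZMod p) (x1 x2 x3 : F), c2 ≠ 0 ∧ c3 ≠ 0 ∧
      x1 ≠ 0 ∧ x2 ≠ 0 ∧ x3 ≠ 0 ∧ x1 ≠ x2 ∧ x1 ≠ x3 ∧ x2 ≠ x3 ∧
      x1 + (ZMod.castHom (dvd_refl p) F c2) * x2 + (ZMod.castHom (dvd_refl p) F c3) * x3 = 0 ∧
      x1 ^ (p ^ m - 2) + (ZMod.castHom (dvd_refl p) F c2) * x2 ^ (p ^ m - 2)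
        + (ZMod.castHom (dvd_refl p) F c3) * x3 ^ (p ^ m - 2) = 0 ∧
      x1 ^ ((p ^ m - 1) / 2) + (ZMod.castHom (dvd_refl p) F c2) * x2 ^ ((p ^ m - 1) / 2)
        + (ZMod.castHom (dvd_refl p) F c3) * x3 ^ ((p ^ m - 1) / 2) = 0 :=
  stmt_5_general p m hp F hcard h4
end

section
/- Let p ≥ 5 be a prime, m a positive integer, e = (p^m - 1)/2 + p^h + 1 for some 0 ≤ h < m, and assume h ≠ m/2 when m is even. Then e is not congruent to any power p^i modulo p^m - 1 (i.e., e ∉ C_1). -/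
/-! Both sides are residues that cannot coincide: `p ^ i ≤ p ^ (m - 1)` lies strictly below
`(p ^ m - 1) / 2 + p ^ h + 1`, which for `p ≥ 4` is still at most `p ^ m - 1`. -/

theorem Nat.not_modEq_of_pos_of_lt_of_le {n a b : ℕ} (hb : 0 < b) (hba : b < a) (han : a ≤ n) :
    ¬ a ≡ b [MOD n] := fun h ↦
  hba.ne' <| h.eq_of_abs_lt <| by
    rw [abs_lt]
    constructor <;> omega

theorem pow_lt_half_pow_sub_one_add_pow_add_one {p m h i : ℕ} (hp : 2 ≤ p) (hi : i < m) :
    p ^ i < (p ^ m - 1) / 2 + p ^ h + 1 := by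
  have hpi : p ^ i ≤ p ^ (m - 1) := Nat.pow_le_pow_right (by omega) (by omega)
  have hpm : 2 * p ^ (m - 1) ≤ p ^ m := by
    rw [← Nat.sub_add_cancel (show 1 ≤ m by omega), pow_succ']
    exact Nat.mul_le_mul_right _ hp
  have hph : 1 ≤ p ^ h := Nat.one_le_pow _ _ (by omega)
  omega

theorem half_pow_sub_one_add_pow_add_one_le {p m h : ℕ} (hp : 4 ≤ p) (hh : h < m) :
    (p ^ m - 1) / 2 + p ^ h + 1 ≤ p ^ m - 1 := by
  have hph : p ^ h ≤ p ^ (m - 1) := Nat.pow_le_pow_right (by omega) (by omega)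
  have hpm : 4 * p ^ (m - 1) ≤ p ^ m := by
    rw [← Nat.sub_add_cancel (show 1 ≤ m by omega), pow_succ']
    exact Nat.mul_le_mul_right _ hp
  have hp1 : 1 ≤ p ^ (m - 1) := Nat.one_le_pow _ _ (by omega)
  omega

theorem stmt_6_general (p m h : ℕ) (hp5 : 5 ≤ p)
    (hh : h < m) :
    ∀ i < m, ¬ ((p ^ m - 1) / 2 + p ^ h + 1 ≡ p ^ i [MOD p ^ m - 1]) := fun i hi ↦
  Nat.not_modEq_of_pos_of_lt_of_le (Nat.pow_pos (by omega))
    (pow_lt_half_pow_sub_one_add_pow_add_one (by omega) hi)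
    (half_pow_sub_one_add_pow_add_one_le (by omega) hh)

theorem stmt_6 (p m h : ℕ) (hp : p.Prime) (hp5 : 5 ≤ p) (hm : 0 < m)
    (hh : h < m) (hhm : Even m → 2 * h ≠ m) :
    ∀ i < m, ¬ ((p ^ m - 1) / 2 + p ^ h + 1 ≡ p ^ i [MOD p ^ m - 1]) :=
  stmt_6_general p m h hp5 hh
end

section
/- Let p ≥ 5 be a prime, m a positive integer, and e = (p^m - 1)/2 + p^h + 1 with 0 ≤ h < m and h ≠ m/2 if m is even. Then the p-cyclotomic coset C_e modulo p^m - 1 has size m. -/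
/-!
Write `n = p ^ m - 1` and `e = n / 2 + (p ^ h + 1)`. Since `p ^ l - 1` is even, the half `n / 2`
contributes a multiple of `n` to `e (p ^ l - 1)`, so `e p ^ l ≡ e` iff `n ∣ (p ^ h + 1)(p ^ l - 1)`.
For `0 < l < m` this product is a positive number below `n` when `h + l < m`; otherwise, as
`p ^ m ≡ 1`, it is congruent to `p ^ k + p ^ l - p ^ h - 1` with `k = h + l - m`, which is smaller
than `n` in absolute value and hence zero. But `p ^ k + p ^ l = p ^ h + 1` with `k < h` forces
`k = 0` and `l = h`, i.e. `m = 2h`.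
-/

lemma half_add_mul_modEq_self_iff {n q c : ℕ} (hn : Even n) (hq : Odd q) :
    (n / 2 + c) * q ≡ n / 2 + c [MOD n] ↔ n ∣ c * (q - 1) := by
  obtain ⟨a, rfl⟩ := hn
  obtain ⟨b, rfl⟩ := hq
  rw [Nat.ModEq.comm, Nat.modEq_iff_dvd' (Nat.le_mul_of_pos_right _ (by omega)), ← Nat.mul_sub_one,
    Nat.add_sub_cancel]
  have hhalf : (a + a) / 2 = a := by omega
  rw [hhalf, show (a + c) * (2 * b) = (a + a) * b + c * (2 * b) by ring]
  exact Nat.dvd_add_right (dvd_mul_right _ _)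

lemma not_pow_sub_one_dvd_of_add_lt {p m h l : ℕ} (hp : 2 ≤ p) (hl : 0 < l) (hhl : h + l < m) :
    ¬ p ^ m - 1 ∣ (p ^ h + 1) * (p ^ l - 1) := by
  have hpl : 2 ≤ p ^ l := hp.trans (Nat.le_self_pow hl.ne' p)
  have hhl_pow : p ^ (h + l) ≤ p ^ (m - 1) := Nat.pow_le_pow_right (by omega) (by omega)
  have hlm : p ^ l ≤ p ^ (m - 1) := Nat.pow_le_pow_right (by omega) (by omega)
  have hm : 2 * p ^ (m - 1) ≤ p ^ m := by
    rw [← Nat.pow_pred_mul (by omega : 0 < m), mul_comm 2]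
    exact Nat.mul_le_mul_left _ hp
  have hh : 1 ≤ p ^ h := Nat.one_le_pow _ _ (by omega)
  obtain ⟨c, hc⟩ : ∃ c, p ^ l = c + 1 := ⟨p ^ l - 1, by omega⟩
  have hexp : p ^ (h + l) = p ^ h * c + p ^ h := by rw [pow_add, hc]; ring
  rw [hc, Nat.add_sub_cancel, add_one_mul]
  exact Nat.not_dvd_of_pos_of_lt (by omega) (by omega)

lemma pow_add_pow_eq_of_pow_sub_one_dvd {p m h l : ℕ} (hp : 2 ≤ p) (hlm : l < m) (hhm : h < m)
    (hml : m ≤ h + l) (hdvd : p ^ m - 1 ∣ (p ^ h + 1) * (p ^ l - 1)) :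
    p ^ (h + l - m) + p ^ l = p ^ h + 1 := by
  set k := h + l - m
  have hp1 : (1 : ℤ) ≤ p := by exact_mod_cast hp.trans' one_le_two
  have hdvdℤ : ((p : ℤ) ^ m - 1) ∣ ((p : ℤ) ^ h + 1) * ((p : ℤ) ^ l - 1) := by
    have := Int.natCast_dvd_natCast.mpr hdvd
    push_cast [Nat.one_le_pow _ _ (by omega : 0 < p)] at this
    exact this
  -- `p ^ (h + l) = p ^ m * p ^ k ≡ p ^ k`
  have hred : ((p : ℤ) ^ h + 1) * ((p : ℤ) ^ l - 1) =
      ((p : ℤ) ^ m - 1) * p ^ k + (p ^ k + p ^ l - p ^ h - 1) := by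
    have : (p : ℤ) ^ h * p ^ l = p ^ m * p ^ k := by
      rw [← pow_add, ← pow_add]; congr 1; omega
    linear_combination this
  rw [hred, dvd_add_right (dvd_mul_right _ _)] at hdvdℤ
  have hk : (p : ℤ) ^ k ≤ p ^ (m - 1) := pow_le_pow_right₀ hp1 (by omega)
  have hl : (p : ℤ) ^ l ≤ p ^ (m - 1) := pow_le_pow_right₀ hp1 (by omega)
  have hh : (p : ℤ) ^ h ≤ p ^ (m - 1) := pow_le_pow_right₀ hp1 (by omega)
  have hm : 2 * (p : ℤ) ^ (m - 1) ≤ p ^ m := by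
    rw [← pow_sub_one_mul (by omega : m ≠ 0), mul_comm 2]
    exact mul_le_mul_of_nonneg_left (by exact_mod_cast hp) (by positivity)
  have hk1 : (1 : ℤ) ≤ p ^ k := one_le_pow₀ hp1
  have hl1 : (1 : ℤ) ≤ p ^ l := one_le_pow₀ hp1
  have hh1 : (1 : ℤ) ≤ p ^ h := one_le_pow₀ hp1
  have hzero := Int.eq_zero_of_abs_lt_dvd hdvdℤ (abs_lt.2 ⟨by linarith, by linarith⟩)
  exact_mod_cast (by push_cast; linarith : ((p ^ k + p ^ l : ℕ) : ℤ) = (p ^ h + 1 : ℕ))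

lemma eq_of_pow_add_pow_eq_pow_add_one {p k l h : ℕ} (hp : 2 ≤ p) (hkh : k < h) (hl : 0 < l)
    (heq : p ^ k + p ^ l = p ^ h + 1) : k = 0 ∧ l = h := by
  rcases Nat.eq_zero_or_pos k with rfl | hk
  · rw [pow_zero, add_comm, Nat.add_right_cancel_iff] at heq
    exact ⟨rfl, Nat.pow_right_injective hp heq⟩
  · have hdvd : p ∣ p ^ h + 1 :=
      heq ▸ dvd_add (dvd_pow_self p hk.ne') (dvd_pow_self p hl.ne')
    have := Nat.dvd_one.mp ((Nat.dvd_add_right (dvd_pow_self p (by omega))).mp hdvd)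
    omega

lemma eq_of_pow_sub_one_dvd_pow_add_one_mul {p m h l : ℕ} (hp : 2 ≤ p) (hl : 0 < l) (hlm : l < m)
    (hhm : h < m) (hdvd : p ^ m - 1 ∣ (p ^ h + 1) * (p ^ l - 1)) : h + l = m ∧ l = h := by
  rcases lt_or_ge (h + l) m with hlt | hge
  · exact absurd hdvd (not_pow_sub_one_dvd_of_add_lt hp hl hlt)
  · obtain ⟨hk, rfl⟩ := eq_of_pow_add_pow_eq_pow_add_one hp (by omega) hl
      (pow_add_pow_eq_of_pow_sub_one_dvd hp hlm hhm hge hdvd)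
    exact ⟨by omega, rfl⟩

theorem stmt_7 (p m h : ℕ) (hp : p.Prime) (hp5 : 5 ≤ p) (hm : 0 < m)
    (hh : h < m) (hhm : Even m → 2 * h ≠ m) :
    IsLeast {l : ℕ | 0 < l ∧
      ((p ^ m - 1) / 2 + p ^ h + 1) * p ^ l ≡ (p ^ m - 1) / 2 + p ^ h + 1 [MOD p ^ m - 1]} m := by
  have hodd : Odd p := hp.odd_of_ne_two (by omega)
  have key (l : ℕ) : ((p ^ m - 1) / 2 + p ^ h + 1) * p ^ l ≡ (p ^ m - 1) / 2 + p ^ h + 1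
      [MOD p ^ m - 1] ↔ p ^ m - 1 ∣ (p ^ h + 1) * (p ^ l - 1) := by
    simpa only [add_assoc] using
      half_add_mul_modEq_self_iff (Nat.Odd.sub_odd hodd.pow odd_one) (hodd.pow (n := l))
  refine ⟨⟨hm, (key m).2 (dvd_mul_left _ _)⟩, fun l ⟨hl, hmod⟩ => ?_⟩
  by_contra! hlm
  obtain ⟨hsum, rfl⟩ :=
    eq_of_pow_sub_one_dvd_pow_add_one_mul hp.two_le hl hlm hh ((key l).1 hmod)
  exact hhm ⟨l, hsum.symm⟩ (by omega)
end

section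
/- Let p ≥ 5 be a prime, m a positive integer with p^m ≡ 1 (mod 4), s = (p^m-1)/2, h an integer with 0 ≤ h < m, and e = s + p^h + 1. Suppose c_2, c_3 ∈ F_p^* with 1 + c_2 + c_3 = 0, and x_1, x_2, x_3 ∈ F_{p^m}^* satisfy x_1^s = x_2^s = x_3^s = 1, x_1 + c_2·x_2 + c_3·x_3 = 0, and x_1^e + c_2·x_2^e + c_3·x_3^e = 0. Then x_2 = x_3. -/
/-!
Since `xᵢ ^ s = 1`, we have `xᵢ ^ e = xᵢ ^ q * xᵢ` with `q = p ^ h`, so the second relation reads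
`∑ cᵢ xᵢ ^ q xᵢ = 0`. Applying the Frobenius power `x ↦ x ^ q`, which fixes the coefficients in
`𝔽_p`, to the first relation gives `∑ cᵢ xᵢ ^ q = 0`. Eliminating `x₁` between the two relations by
means of `1 + c₂ + c₃ = 0` leaves `c₂ c₃ (x₂ - x₃) ^ (q + 1) = 0`.
-/

theorem pow_add_add_one_of_pow_eq_one {M : Type*} [Monoid M] {x : M} {s : ℕ} (hx : x ^ s = 1)
    (n : ℕ) : x ^ (s + n + 1) = x ^ n * x := by
  rw [pow_succ, pow_add, hx, one_mul]

theorem ZMod.castHom_pow_prime_pow {p : ℕ} [Fact p.Prime] {R : Type*} [Ring R] [CharP R p]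
    (c : ZMod p) (n : ℕ) : ZMod.castHom (dvd_refl p) R c ^ p ^ n = ZMod.castHom (dvd_refl p) R c := by
  rw [← map_pow, ZMod.pow_card_pow]

theorem mul_add_mul_add_mul_of_add_eq_zero {R : Type*} [CommRing R] {c₂ c₃ x₁ x₂ x₃ y₁ y₂ y₃ : R}
    (hc : 1 + c₂ + c₃ = 0) (hx : x₁ + c₂ * x₂ + c₃ * x₃ = 0) (hy : y₁ + c₂ * y₂ + c₃ * y₃ = 0) :
    x₁ * y₁ + c₂ * (x₂ * y₂) + c₃ * (x₃ * y₃) = -(c₂ * c₃ * ((x₂ - x₃) * (y₂ - y₃))) := by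
  linear_combination x₁ * hy - (c₂ * y₂ + c₃ * y₃) * hx
    + (c₂ * x₂ * y₂ + c₃ * x₃ * y₃) * hc

theorem eq_of_add_mul_add_mul_eq_zero_of_frobenius {F : Type*} [Field F] (p : ℕ) [ExpChar F p]
    (n : ℕ) {c₂ c₃ x₁ x₂ x₃ : F} (hc₂ : c₂ ≠ 0) (hc₃ : c₃ ≠ 0) (hc : 1 + c₂ + c₃ = 0)
    (hc₂p : c₂ ^ p ^ n = c₂) (hc₃p : c₃ ^ p ^ n = c₃) (h₁ : x₁ + c₂ * x₂ + c₃ * x₃ = 0)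
    (h₂ : x₁ ^ p ^ n * x₁ + c₂ * (x₂ ^ p ^ n * x₂) + c₃ * (x₃ ^ p ^ n * x₃) = 0) :
    x₂ = x₃ := by
  have h₁' : x₁ ^ p ^ n + c₂ * x₂ ^ p ^ n + c₃ * x₃ ^ p ^ n = 0 := by
    simpa only [map_add, map_mul, map_zero, iterateFrobenius_def, hc₂p, hc₃p]
      using congrArg (iterateFrobenius F p n) h₁
  rw [mul_add_mul_add_mul_of_add_eq_zero hc h₁' h₁, neg_eq_zero, ← sub_pow_expChar_pow,
    ← pow_succ] at h₂
  simpa [hc₂, hc₃, sub_eq_zero] using h₂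

theorem stmt_8_general (p m h : ℕ) (hp : p.Prime)
    (F : Type) [Field F] [CharP F p]
    (c2 c3 : ZMod p) (hc2 : c2 ≠ 0) (hc3 : c3 ≠ 0)
    (hsum : 1 + c2 + c3 = 0)
    (x1 x2 x3 : F)
    (hs1 : x1 ^ ((p ^ m - 1) / 2) = 1) (hs2 : x2 ^ ((p ^ m - 1) / 2) = 1)
    (hs3 : x3 ^ ((p ^ m - 1) / 2) = 1)
    (heq1 : x1 + (ZMod.castHom (dvd_refl p) F c2) * x2 + (ZMod.castHom (dvd_refl p) F c3) * x3 = 0)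
    (heq2 : x1 ^ ((p ^ m - 1) / 2 + p ^ h + 1)
      + (ZMod.castHom (dvd_refl p) F c2) * x2 ^ ((p ^ m - 1) / 2 + p ^ h + 1)
      + (ZMod.castHom (dvd_refl p) F c3) * x3 ^ ((p ^ m - 1) / 2 + p ^ h + 1) = 0) :
    x2 = x3 := by
  have : Fact p.Prime := ⟨hp⟩
  have hinj := (ZMod.castHom (dvd_refl p) F).injective
  rw [pow_add_add_one_of_pow_eq_one hs1, pow_add_add_one_of_pow_eq_one hs2,
    pow_add_add_one_of_pow_eq_one hs3] at heq2
  refine eq_of_add_mul_add_mul_eq_zero_of_frobenius p h ((map_ne_zero_iff _ hinj).2 hc2)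
    ((map_ne_zero_iff _ hinj).2 hc3) ?_ (ZMod.castHom_pow_prime_pow c2 h)
    (ZMod.castHom_pow_prime_pow c3 h) heq1 heq2
  simpa using congrArg (ZMod.castHom (dvd_refl p) F) hsum

theorem stmt_8 (p m h : ℕ) (hp : p.Prime) (hp5 : 5 ≤ p) (hm : 0 < m)
    (hh : h < m) (h4 : p ^ m % 4 = 1)
    (F : Type) [Field F] [Fintype F] [CharP F p]
    (hcard : Fintype.card F = p ^ m)
    (c2 c3 : ZMod p) (hc2 : c2 ≠ 0) (hc3 : c3 ≠ 0)
    (hsum : 1 + c2 + c3 = 0)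
    (x1 x2 x3 : F) (hx1 : x1 ≠ 0) (hx2 : x2 ≠ 0) (hx3 : x3 ≠ 0)
    (hs1 : x1 ^ ((p ^ m - 1) / 2) = 1) (hs2 : x2 ^ ((p ^ m - 1) / 2) = 1)
    (hs3 : x3 ^ ((p ^ m - 1) / 2) = 1)
    (heq1 : x1 + (ZMod.castHom (dvd_refl p) F c2) * x2 + (ZMod.castHom (dvd_refl p) F c3) * x3 = 0)
    (heq2 : x1 ^ ((p ^ m - 1) / 2 + p ^ h + 1)
      + (ZMod.castHom (dvd_refl p) F c2) * x2 ^ ((p ^ m - 1) / 2 + p ^ h + 1)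
      + (ZMod.castHom (dvd_refl p) F c3) * x3 ^ ((p ^ m - 1) / 2 + p ^ h + 1) = 0) :
    x2 = x3 :=
  stmt_8_general p m h hp F c2 c3 hc2 hc3 hsum x1 x2 x3 hs1 hs2 hs3 heq1 heq2
end

section
/- Let p ≥ 5 be a prime, m a positive integer, and s = (p^m - 1)/2. Then there exist c_1, c_2 ∈ F_p^* and distinct elements x, y ∈ F_p \ {0, 1} such that 1 + c_1·x + c_2·y = 0 and 1 + c_1·x^s + c_2·y^s = 0 (where x^s, y^s are computed in F_{p^m} via the embedding of F_p into F_{p^m}). -/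
/-!
In `𝔽_{p^m}` the power `s = (p^m - 1)/2` of a nonzero element is `ε = ±1`, and `2` and `2⁻¹`
have the same such power. For `x, y` with `x^s = y^s = ε` the second relation reads
`1 + (c₁ + c₂) ε = 0`, so it suffices to solve the linear system `c₁ x + c₂ y = -1`,
`c₁ + c₂ = -ε` over `𝔽_p`; its solution has nonzero entries as soon as `x, y ≠ ε`.
-/

theorem exists_relation_of_pow_eq {K F : Type*} [Field K] [Field F] (φ : K →+* F)
    {x y ε : K} (hxy : x ≠ y) (hx : x ≠ ε) (hy : y ≠ ε) (hε : ε * ε = 1) {n : ℕ}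
    (hxn : φ x ^ n = φ ε) (hyn : φ y ^ n = φ ε) :
    ∃ c1 c2 : K, c1 ≠ 0 ∧ c2 ≠ 0 ∧ 1 + c1 * x + c2 * y = 0 ∧
      1 + φ c1 * φ x ^ n + φ c2 * φ y ^ n = 0 := by
  have hsub : x - y ≠ 0 := sub_ne_zero.mpr hxy
  have hεy : ε * y - 1 ≠ 0 := fun h => hy <| by linear_combination ε * h - y * hε
  have hεx : 1 - ε * x ≠ 0 := fun h => hx <| by linear_combination -ε * h - x * hε
  refine ⟨(ε * y - 1) / (x - y), (1 - ε * x) / (x - y), div_ne_zero hεy hsub,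
    div_ne_zero hεx hsub, ?_, ?_⟩
  · field_simp
    ring
  · have hsum : 1 + ((ε * y - 1) / (x - y) + (1 - ε * x) / (x - y)) * ε = 0 := by
      field_simp
      linear_combination (y - x) * hε
    rw [hxn, hyn, ← map_mul, ← map_mul, add_assoc, ← map_add, ← add_mul, ← map_one φ, ← map_add,
      hsum, map_zero]

theorem ZMod.natCast_ne_zero_of_pos_of_lt {p n : ℕ} (hn : 0 < n) (hnp : n < p) :
    (n : ZMod p) ≠ 0 := by
  rw [Ne, ZMod.natCast_eq_zero_iff]
  exact fun h => absurd (Nat.le_of_dvd hn h) (by omega)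

theorem FiniteField.pow_card_sub_one_div_two_eq_one_or_eq_neg_one {F : Type*} [Field F]
    [Fintype F] (hF : ringChar F ≠ 2) {a : F} (ha : a ≠ 0) :
    a ^ ((Fintype.card F - 1) / 2) = 1 ∨ a ^ ((Fintype.card F - 1) / 2) = -1 := by
  have hodd := FiniteField.odd_card_of_char_ne_two hF
  rw [show (Fintype.card F - 1) / 2 = Fintype.card F / 2 by omega]
  exact FiniteField.pow_dichotomy hF ha

theorem stmt_9_general (p m : ℕ) (hp : p.Prime) (hp5 : 5 ≤ p)
    (F : Type) [Field F] [Fintype F] [CharP F p]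
    (hcard : Fintype.card F = p ^ m) :
    ∃ c1 c2 x y : ZMod p, c1 ≠ 0 ∧ c2 ≠ 0 ∧
      x ≠ 0 ∧ x ≠ 1 ∧ y ≠ 0 ∧ y ≠ 1 ∧ x ≠ y ∧
      1 + c1 * x + c2 * y = 0 ∧
      1 + (ZMod.castHom (dvd_refl p) F c1) * (ZMod.castHom (dvd_refl p) F x) ^ ((p ^ m - 1) / 2)
        + (ZMod.castHom (dvd_refl p) F c2) * (ZMod.castHom (dvd_refl p) F y) ^ ((p ^ m - 1) / 2) = 0 := by
  have : Fact p.Prime := ⟨hp⟩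
  set φ := ZMod.castHom (dvd_refl p) F
  have h2 : (2 : ZMod p) ≠ 0 := by
    exact_mod_cast ZMod.natCast_ne_zero_of_pos_of_lt two_pos (by omega)
  have h3 : (3 : ZMod p) ≠ 0 := by
    exact_mod_cast ZMod.natCast_ne_zero_of_pos_of_lt three_pos (by omega)
  have h21 : (2 : ZMod p) ≠ 1 := fun h => one_ne_zero (by linear_combination h)
  have hF : ringChar F ≠ 2 := by rw [ringChar.eq F p]; omega
  obtain ⟨ε, hε, hεs⟩ : ∃ ε : ZMod p, (ε = 1 ∨ ε = -1) ∧ φ 2 ^ ((p ^ m - 1) / 2) = φ ε := by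
    rcases hcard ▸ FiniteField.pow_card_sub_one_div_two_eq_one_or_eq_neg_one hF
      ((map_ne_zero φ).mpr h2) with h | h
    · exact ⟨1, .inl rfl, by rw [h, map_one]⟩
    · exact ⟨-1, .inr rfl, by rw [h, map_neg, map_one]⟩
  have hεε : ε * ε = 1 := by rcases hε with rfl | rfl <;> ring
  have hεinv : ε⁻¹ = ε := inv_eq_of_mul_eq_one_left hεε
  have h2ε : (2 : ZMod p) ≠ ε := by
    rcases hε with rfl | rfl
    exacts [h21, fun h => h3 (by linear_combination h)]
  have h2invε : (2 : ZMod p)⁻¹ ≠ ε := fun h => h2ε (by rw [← inv_inv (2 : ZMod p), h, hεinv])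
  have h2inv : (2 : ZMod p) ≠ 2⁻¹ := fun h => h3 <| by
    linear_combination (congrArg (2 * ·) h).trans (mul_inv_cancel₀ h2)
  obtain ⟨c1, c2, hc1, hc2, hrel, hrels⟩ := exists_relation_of_pow_eq φ h2inv h2ε h2invε hεε hεs
    (by rw [map_inv₀, inv_pow, hεs, ← map_inv₀, hεinv])
  exact ⟨c1, c2, 2, 2⁻¹, hc1, hc2, h2, h21, inv_ne_zero h2, fun h => h21 (inv_eq_one.mp h),
    h2inv, hrel, hrels⟩

theorem stmt_9 (p m : ℕ) (hp : p.Prime) (hp5 : 5 ≤ p) (hm : 0 < m)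
    (F : Type) [Field F] [Fintype F] [CharP F p]
    (hcard : Fintype.card F = p ^ m) :
    ∃ c1 c2 x y : ZMod p, c1 ≠ 0 ∧ c2 ≠ 0 ∧
      x ≠ 0 ∧ x ≠ 1 ∧ y ≠ 0 ∧ y ≠ 1 ∧ x ≠ y ∧
      1 + c1 * x + c2 * y = 0 ∧
      1 + (ZMod.castHom (dvd_refl p) F c1) * (ZMod.castHom (dvd_refl p) F x) ^ ((p ^ m - 1) / 2)
        + (ZMod.castHom (dvd_refl p) F c2) * (ZMod.castHom (dvd_refl p) F y) ^ ((p ^ m - 1) / 2) = 0 :=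
  stmt_9_general p m hp hp5 F hcard
end

section
/- Let p be an odd prime with p ≡ 1 (mod 4). Then there exist c ∈ F_p^* and x ∈ F_p \ {0, c, -c} such that x^{(p-1)/2} = -c^{(p-1)/2} and (x+1)^{(p-1)/2} = -(c-1)^{(p-1)/2}. -/
/-!
Take a non-square `n` and put `x = n c`, so that `x` and `c` have opposite quadratic characters.
Requiring moreover `x + 1 = 4 n (c - 1)` forces `c = (4 n + 1) / (3 n)`, and then `x + 1` and
`c - 1` have opposite characters too, because `4` is a square. Since `-1` is a square when
`q ≡ 1 (mod 4)`, the non-square `n` differs from `0`, `1`, `-1` and `-1/4`, which is exactly what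
makes `c` well defined and nonzero and keeps `x` away from `0` and `±c`.
-/

section Field

variable {F : Type*} [Field F]

theorem four_mul_add_one_ne_zero_of_not_isSquare {n : F} (h2 : (2 : F) ≠ 0)
    (hneg : IsSquare (-1 : F)) (hn : ¬IsSquare n) : 4 * n + 1 ≠ 0 := by
  intro h
  have hn_eq : n = -1 * (2⁻¹ * 2⁻¹) := by
    field_simp
    linear_combination h
  exact hn (hn_eq ▸ hneg.mul ⟨2⁻¹, rfl⟩)

theorem mul_div_add_one_eq_four_mul_mul_sub_one {n : F} (h3 : (3 : F) ≠ 0) (hn : n ≠ 0) :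
    n * ((4 * n + 1) / (3 * n)) + 1 = 4 * n * ((4 * n + 1) / (3 * n) - 1) := by
  field_simp
  ring

end Field

namespace FiniteField

variable {F : Type*} [Field F] [Fintype F]

theorem pow_card_div_two_eq_neg_one_of_not_isSquare (hF : ringChar F ≠ 2) {a : F}
    (ha : ¬IsSquare a) : a ^ (Fintype.card F / 2) = -1 := by
  have ha0 : a ≠ 0 := by
    rintro rfl
    exact ha IsSquare.zero
  exact (pow_dichotomy hF ha0).resolve_left fun h => ha ((isSquare_iff hF ha0).2 h)

theorem exists_pow_card_div_two_eq_neg_of_card_mod_four_eq_one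
    (hcard : Fintype.card F % 4 = 1) (h3 : (3 : F) ≠ 0) :
    ∃ c x : F, c ≠ 0 ∧ x ≠ 0 ∧ x ≠ c ∧ x ≠ -c ∧
      x ^ (Fintype.card F / 2) = -c ^ (Fintype.card F / 2) ∧
      (x + 1) ^ (Fintype.card F / 2) = -(c - 1) ^ (Fintype.card F / 2) := by
  have hF : ringChar F ≠ 2 := by
    rw [Ne, even_card_iff_char_two]
    omega
  have h2 : (2 : F) ≠ 0 := Ring.two_ne_zero hF
  have h4 : (4 : F) ≠ 0 := by
    simpa [show (4 : F) = 2 * 2 by norm_num] using mul_ne_zero h2 h2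
  have hneg : IsSquare (-1 : F) := isSquare_neg_one_iff.2 (by omega)
  obtain ⟨n, hn⟩ := exists_nonsquare hF
  have hn0 : n ≠ 0 := by rintro rfl; exact hn IsSquare.zero
  have hn1 : n ≠ 1 := by rintro rfl; exact hn IsSquare.one
  have hn_neg : n ≠ -1 := by rintro rfl; exact hn hneg
  have hχn := pow_card_div_two_eq_neg_one_of_not_isSquare hF hn
  have hχ4 : (4 : F) ^ (Fintype.card F / 2) = 1 := (isSquare_iff hF h4).1 ⟨2, by norm_num⟩
  have h3n : 3 * n ≠ 0 := mul_ne_zero h3 hn0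
  set c := (4 * n + 1) / (3 * n)
  have hc0 : c ≠ 0 := div_ne_zero (four_mul_add_one_ne_zero_of_not_isSquare h2 hneg hn) h3n
  refine ⟨c, n * c, hc0, mul_ne_zero hn0 hc0, ?_, ?_, ?_, ?_⟩
  · exact fun h => hn1 (mul_right_cancel₀ hc0 (h.trans (one_mul c).symm))
  · exact fun h => hn_neg (mul_right_cancel₀ hc0 (h.trans (neg_one_mul c).symm))
  · rw [mul_pow, hχn, neg_one_mul]
  · rw [mul_div_add_one_eq_four_mul_mul_sub_one h3 hn0, mul_pow, mul_pow, hχ4, hχn]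
    ring

end FiniteField

theorem stmt_10_general (p : ℕ) (hp : p.Prime) (h4 : p % 4 = 1) :
    ∃ c x : ZMod p, c ≠ 0 ∧ x ≠ 0 ∧ x ≠ c ∧ x ≠ -c ∧
      x ^ ((p - 1) / 2) = -c ^ ((p - 1) / 2) ∧
      (x + 1) ^ ((p - 1) / 2) = -(c - 1) ^ ((p - 1) / 2) := by
  have := Fact.mk hp
  have h3 : (3 : ZMod p) ≠ 0 := by
    intro h
    have hdvd := (ZMod.natCast_eq_zero_iff 3 p).1 (by exact_mod_cast h)
    have := Nat.le_of_dvd (by norm_num) hdvd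
    have := hp.two_le
    omega
  have := FiniteField.exists_pow_card_div_two_eq_neg_of_card_mod_four_eq_one
    (by rwa [ZMod.card]) h3
  rwa [ZMod.card, ← show (p - 1) / 2 = p / 2 by omega] at this

theorem stmt_10 (p : ℕ) (hp : p.Prime) (hodd : Odd p) (h4 : p % 4 = 1) :
    ∃ c x : ZMod p, c ≠ 0 ∧ x ≠ 0 ∧ x ≠ c ∧ x ≠ -c ∧
      x ^ ((p - 1) / 2) = -c ^ ((p - 1) / 2) ∧
      (x + 1) ^ ((p - 1) / 2) = -(c - 1) ^ ((p - 1) / 2) :=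
  stmt_10_general p hp h4
end

section
/- Let p be an odd prime with p ≡ 3 (mod 4), p ≥ 7. Then there exist c ∈ F_p^* and x ∈ F_p \ {0, c, -c} such that x^{(p-1)/2} = -c^{(p-1)/2} and (x+1)^{(p-1)/2} = -(c-1)^{(p-1)/2}. -/
/-!
Take `c = 5/4` and `x = -5`, and write `e = (p - 1)/2`. Since `p ≡ 3 (mod 4)`, `e` is odd, so
`(-a)^e = -a^e`; and `4 = 2^2` gives `4^e = 1` by Fermat. Hence `x^e = -5^e = -c^e`, and
`(x + 1)^e = (-4)^e = -1 = -(1/4)^e = -(c - 1)^e`. The exclusions `x ≠ 0, ±c` only ask that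
`2`, `3` and `5` be invertible mod `p`, which is where `p ≥ 7` enters.
-/

theorem ZMod.natCast_ne_zero_of_lt {p n : ℕ} (hn : n ≠ 0) (hnp : n < p) : (n : ZMod p) ≠ 0 :=
  fun h => hn (Nat.eq_zero_of_dvd_of_lt ((ZMod.natCast_eq_zero_iff n p).1 h) hnp)

section FiveQuarters

variable {K : Type*} [Field K]

theorem neg_five_ne_five_div_four (h4 : (4 : K) ≠ 0) (h5 : (5 : K) ≠ 0) :
    (-5 : K) ≠ 5 / 4 := by
  intro h
  rw [eq_div_iff h4] at h
  exact mul_self_ne_zero.2 h5 (by linear_combination -h)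

theorem neg_five_ne_neg_five_div_four (h3 : (3 : K) ≠ 0) (h4 : (4 : K) ≠ 0)
    (h5 : (5 : K) ≠ 0) : (-5 : K) ≠ -(5 / 4) := by
  intro h
  rw [neg_inj, eq_div_iff h4] at h
  exact mul_ne_zero h3 h5 (by linear_combination h)

variable {e : ℕ}

theorem Odd.neg_five_pow_eq_neg_five_div_four_pow (he : Odd e) (h4e : (4 : K) ^ e = 1) :
    (-5 : K) ^ e = -(5 / 4) ^ e := by
  rw [he.neg_pow, div_pow, h4e, div_one]

theorem Odd.neg_five_add_one_pow_eq_neg_five_div_four_sub_one_pow (he : Odd e)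
    (h4e : (4 : K) ^ e = 1) : (-5 + 1 : K) ^ e = -(5 / 4 - 1) ^ e := by
  have h4ne : (4 : K) ≠ 0 := fun h => by simp [h, he.pos.ne'] at h4e
  rw [show (-5 + 1 : K) = -4 by norm_num, show (5 / 4 - 1 : K) = 1 / 4 by field_simp; norm_num,
    he.neg_pow, div_pow, h4e, one_pow, div_one]

end FiveQuarters

theorem stmt_11_general (p : ℕ) (hp : p.Prime) (h4 : p % 4 = 3) (hp7 : 7 ≤ p) :
    ∃ c x : ZMod p, c ≠ 0 ∧ x ≠ 0 ∧ x ≠ c ∧ x ≠ -c ∧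
      x ^ ((p - 1) / 2) = -c ^ ((p - 1) / 2) ∧
      (x + 1) ^ ((p - 1) / 2) = -(c - 1) ^ ((p - 1) / 2) := by
  have : Fact p.Prime := ⟨hp⟩
  have hsmall (n : ℕ) (hn : n ≠ 0) (hn7 : n < 7) : (n : ZMod p) ≠ 0 :=
    ZMod.natCast_ne_zero_of_lt hn (by omega)
  have h2ne : (2 : ZMod p) ≠ 0 := by exact_mod_cast hsmall 2 (by norm_num) (by norm_num)
  have h3ne : (3 : ZMod p) ≠ 0 := by exact_mod_cast hsmall 3 (by norm_num) (by norm_num)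
  have h4ne : (4 : ZMod p) ≠ 0 := by exact_mod_cast hsmall 4 (by norm_num) (by norm_num)
  have h5ne : (5 : ZMod p) ≠ 0 := by exact_mod_cast hsmall 5 (by norm_num) (by norm_num)
  have he : Odd ((p - 1) / 2) := Nat.odd_iff.2 (by omega)
  have h4e : (4 : ZMod p) ^ ((p - 1) / 2) = 1 := by
    rw [show (4 : ZMod p) = 2 ^ 2 by norm_num, ← pow_mul, show 2 * ((p - 1) / 2) = p - 1 by omega,
      ZMod.pow_card_sub_one_eq_one h2ne]
  exact ⟨5 / 4, -5, div_ne_zero h5ne h4ne, neg_ne_zero.2 h5ne,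
    neg_five_ne_five_div_four h4ne h5ne, neg_five_ne_neg_five_div_four h3ne h4ne h5ne,
    he.neg_five_pow_eq_neg_five_div_four_pow h4e,
    he.neg_five_add_one_pow_eq_neg_five_div_four_sub_one_pow h4e⟩

theorem stmt_11 (p : ℕ) (hp : p.Prime) (hodd : Odd p) (h4 : p % 4 = 3) (hp7 : 7 ≤ p) :
    ∃ c x : ZMod p, c ≠ 0 ∧ x ≠ 0 ∧ x ≠ c ∧ x ≠ -c ∧
      x ^ ((p - 1) / 2) = -c ^ ((p - 1) / 2) ∧
      (x + 1) ^ ((p - 1) / 2) = -(c - 1) ^ ((p - 1) / 2) :=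
  stmt_11_general p hp h4 hp7
end

section
/- Let p ≥ 5 be a prime, m an even positive integer, and h, k positive integers with gcd(h+k, m) = 1 and gcd(h-k, m) = 1. Let e be an integer with e·(p^k + 1) ≡ p^h + 1 (mod p^m - 1). If y ∈ F_{p^m}^* satisfies y^{p^h} + y = y^{e·p^k} + y^e, then y ∈ F_p^*. -/
/-!
Write `φ` for the Frobenius `x ↦ x ^ p` of `F`. The congruence on `e` gives
`y ^ e * (y ^ e) ^ (p ^ k) = y * y ^ (p ^ h)`, so the pairs `(y, y ^ (p ^ h))` and
`(y ^ e, y ^ (e * p ^ k))` have the same sum and the same product, and `y` equals `y ^ e` or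
`y ^ (e * p ^ k)`. In the first case `φ^[h] y = φ^[k] y`, in the second `φ^[h + k] y = y`.
Either way `y` is a periodic point of `φ` with a period coprime to `m`; as `φ^[m] y = y` too,
`y` is fixed by `φ`, i.e. lies in the prime field.
-/

open Function

theorem Function.Injective.isPeriodicPt_natAbs_sub {α : Type*} {f : α → α} (hf : Injective f)
    {x : α} {a b : ℕ} (h : f^[a] x = f^[b] x) : IsPeriodicPt f ((a : ℤ) - b).natAbs x := by
  wlog hba : b ≤ a generalizing a b
  · rw [show ((a : ℤ) - b).natAbs = ((b : ℤ) - a).natAbs by omega]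
    exact this h.symm (by omega)
  rw [show ((a : ℤ) - b).natAbs = a - b by omega]
  apply hf.iterate b
  rw [← iterate_add_apply, Nat.add_sub_cancel' hba, h]

theorem isPeriodicPt_frobenius_iff {R : Type*} [CommSemiring R] (p : ℕ) [ExpChar R p] {n : ℕ}
    {x : R} : IsPeriodicPt (frobenius R p) n x ↔ x ^ p ^ n = x := by
  rw [IsPeriodicPt, IsFixedPt, iterate_frobenius]

theorem mem_range_zmodCastHom_iff_pow_eq_self {F : Type*} [Field F] (p : ℕ) [Fact p.Prime]
    [CharP F p] {x : F} : x ∈ Set.range (ZMod.castHom (dvd_refl p) F) ↔ x ^ p = x := by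
  rw [← Subfield.mem_bot_iff_pow_eq_self F p, ← ZMod.fieldRange_castHom_eq_bot p]
  rfl

theorem eq_or_eq_of_add_eq_add_of_mul_eq_mul {R : Type*} [CommRing R] [NoZeroDivisors R]
    {a b c d : R} (hs : a + b = c + d) (hp : a * b = c * d) : a = c ∨ a = d := by
  have : (a - c) * (a - d) = 0 := by linear_combination a * hs - hp
  simpa only [mul_eq_zero, sub_eq_zero] using this

theorem stmt_12_general (p m h k e : ℕ) (hp : p.Prime)
    (hg1 : Nat.gcd (h + k) m = 1) (hg2 : Int.gcd ((h : ℤ) - (k : ℤ)) (m : ℤ) = 1)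
    (he : e * (p ^ k + 1) ≡ p ^ h + 1 [MOD p ^ m - 1])
    (F : Type) [Field F] [Fintype F] [CharP F p]
    (hcard : Fintype.card F = p ^ m)
    (y : F) (hy : y ≠ 0)
    (heq : y ^ (p ^ h) + y = y ^ (e * p ^ k) + y ^ e) :
    y ∈ Set.range (ZMod.castHom (dvd_refl p) F) ∧ y ≠ 0 := by
  have := Fact.mk hp
  have hperiod_m : IsPeriodicPt (frobenius F p) m y := by
    rw [isPeriodicPt_frobenius_iff, ← hcard, FiniteField.pow_card]
  have hprod : y * y ^ p ^ h = y ^ e * y ^ (e * p ^ k) := by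
    rw [← pow_succ', ← pow_add, show e + e * p ^ k = e * (p ^ k + 1) by ring]
    exact (pow_eq_pow_of_modEq he (hcard ▸ FiniteField.pow_card_sub_one_eq_one y hy)).symm
  have hfixed : IsPeriodicPt (frobenius F p) 1 y := by
    rcases eq_or_eq_of_add_eq_add_of_mul_eq_mul (by rw [add_comm, heq, add_comm]) hprod with
      hy_e | hy_epk
    · have hiterate : (frobenius F p)^[h] y = (frobenius F p)^[k] y := by
        rw [pow_mul, ← hy_e, add_left_inj] at heq
        rwa [iterate_frobenius, iterate_frobenius]
      have hg : ((h : ℤ) - k).natAbs.gcd m = 1 := hg2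
      exact hg ▸ ((frobenius_inj F p).isPeriodicPt_natAbs_sub hiterate).gcd hperiod_m
    · have hperiod_hk : IsPeriodicPt (frobenius F p) (h + k) y := by
        rw [← hy_epk, add_comm, add_right_inj] at heq
        rw [isPeriodicPt_frobenius_iff, pow_add, pow_mul, heq, ← pow_mul, ← hy_epk]
      exact hg1 ▸ hperiod_hk.gcd hperiod_m
  rw [isPeriodicPt_frobenius_iff, pow_one] at hfixed
  exact ⟨(mem_range_zmodCastHom_iff_pow_eq_self p).mpr hfixed, hy⟩

theorem stmt_12 (p m h k e : ℕ) (hp : p.Prime) (hp5 : 5 ≤ p) (hm : 0 < m)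
    (hmeven : Even m) (hh : 0 < h) (hk : 0 < k)
    (hg1 : Nat.gcd (h + k) m = 1) (hg2 : Int.gcd ((h : ℤ) - (k : ℤ)) (m : ℤ) = 1)
    (he : e * (p ^ k + 1) ≡ p ^ h + 1 [MOD p ^ m - 1])
    (F : Type) [Field F] [Fintype F] [CharP F p]
    (hcard : Fintype.card F = p ^ m)
    (y : F) (hy : y ≠ 0)
    (heq : y ^ (p ^ h) + y = y ^ (e * p ^ k) + y ^ e) :
    y ∈ Set.range (ZMod.castHom (dvd_refl p) F) ∧ y ≠ 0 :=
  stmt_12_general p m h k e hp hg1 hg2 he F hcard y hy heq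
end
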